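/- arXiv:2503.12802 — 2 statements merged into one kernel-verified Lean document; each statement's English description precedes it below -/
import Mathlib

section
/- (Traditional Fano inequality) For a joint distribution p^{XY} on {1,...,n}² with error probability E = ∑_{x≠y} p^{XY}(x,y), the conditional Shannon entropy satisfies S^{Y|X} ≤ −E ln E − (1−E) ln(1−E) + E ln(n−1). -/
open Finset

-- Marginal on `X` of a joint distribution `r` on `{1,…,n}²`.
noncomputable def pXof (n : ℕ) (r : ℕ → ℕ → ℝ) (x : ℕ) : ℝ :=
  ∑ y ∈ Finset.Icc 1 n, r x y

-- Conditional Shannon entropy `S^{Y|X} = ∑_x p^X(x) S(p^{Y|x})` of a joint distribution,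
-- with `p^{Y|x}(y) = r(x,y)/p^X(x)` (terms with `p^X(x) = 0` contribute zero).
noncomputable def condEnt (n : ℕ) (r : ℕ → ℕ → ℝ) : ℝ :=
  ∑ x ∈ Finset.Icc 1 n, pXof n r x *
    (-∑ y ∈ Finset.Icc 1 n, (r x y / pXof n r x) * Real.log (r x y / pXof n r x))

-- The error probability `E = ∑_{x ≠ y} r(x,y)`.
noncomputable def errProb (n : ℕ) (r : ℕ → ℕ → ℝ) : ℝ :=
  ∑ x ∈ Finset.Icc 1 n, ∑ y ∈ Finset.Icc 1 n, if x = y then 0 else r x y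

/-!
Write `S^{Y|X} = ∑_{x,y} p(x,y) ln (p^X(x) / p(x,y))` and split the pairs into the diagonal and
the off-diagonal. The log-sum inequality bounds each part by `A ln (B / A)`, where `A` is the
`p`-mass of the part and `B` the `p^X`-mass it receives: `A = 1 - E`, `B = 1` on the diagonal and
`A = E`, `B = n - 1` off it. Adding the two bounds gives the claim.
-/

open Real

namespace Real

-- Both sides vanish when `a = 0` or `b = 0`, by `log 0 = 0` and `x / 0 = 0`.
theorem mul_log_div_eq_mul_negMulLog_div (a b : ℝ) : a * log (b / a) = b * negMulLog (a / b) := by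
  rcases eq_or_ne a 0 with rfl | ha
  · simp
  rcases eq_or_ne b 0 with rfl | hb
  · simp
  rw [negMulLog, ← inv_div, log_inv]
  field_simp

theorem mul_log_div_eq_mul_log_sub_mul_log {a b : ℝ} (ha : 0 ≤ a) (hab : a ≤ b) :
    a * log (b / a) = a * log b - a * log a := by
  rcases ha.eq_or_lt with rfl | ha
  · simp
  rw [log_div (ha.trans_le hab).ne' ha.ne']
  ring

section LogSum

variable {ι : Type*} (s : Finset ι) {a b : ι → ℝ}

theorem sum_mul_negMulLog_div_le (ha : ∀ i ∈ s, 0 ≤ a i) (hb : ∀ i ∈ s, 0 ≤ b i)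
    (hab : ∀ i ∈ s, b i = 0 → a i = 0) :
    ∑ i ∈ s, b i * negMulLog (a i / b i)
      ≤ (∑ i ∈ s, b i) * negMulLog ((∑ i ∈ s, a i) / ∑ i ∈ s, b i) := by
  set B := ∑ i ∈ s, b i
  rcases (sum_nonneg hb).eq_or_lt with hB | hB
  · have hb0 : ∀ i ∈ s, b i = 0 := (sum_eq_zero_iff_of_nonneg hb).1 hB.symm
    rw [show B = 0 from hB.symm, zero_mul, sum_eq_zero fun i hi => by rw [hb0 i hi, zero_mul]]
  have hw : ∑ i ∈ s, b i / B = 1 := by rw [← sum_div, div_self hB.ne']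
  have hmean : ∑ i ∈ s, (b i / B) • (a i / b i) = (∑ i ∈ s, a i) / B := by
    rw [sum_div]
    refine sum_congr rfl fun i hi => ?_
    rcases eq_or_ne (b i) 0 with h | h
    · simp [h, hab i hi h]
    · rw [smul_eq_mul]
      field_simp
  have jensen := concaveOn_negMulLog.le_map_sum (fun i hi => div_nonneg (hb i hi) hB.le) hw
    (fun i hi => Set.mem_Ici.2 (div_nonneg (ha i hi) (hb i hi)))
  rw [hmean] at jensen
  calc ∑ i ∈ s, b i * negMulLog (a i / b i)
      = B * ∑ i ∈ s, (b i / B) • negMulLog (a i / b i) := by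
        rw [mul_sum]
        refine sum_congr rfl fun i _ => ?_
        rw [smul_eq_mul, ← mul_assoc, mul_div_cancel₀ _ hB.ne']
    _ ≤ B * negMulLog ((∑ i ∈ s, a i) / B) := mul_le_mul_of_nonneg_left jensen hB.le

theorem sum_mul_log_div_le (ha : ∀ i ∈ s, 0 ≤ a i) (hb : ∀ i ∈ s, 0 ≤ b i)
    (hab : ∀ i ∈ s, b i = 0 → a i = 0) :
    ∑ i ∈ s, a i * log (b i / a i)
      ≤ (∑ i ∈ s, a i) * log ((∑ i ∈ s, b i) / ∑ i ∈ s, a i) := by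
  simpa only [mul_log_div_eq_mul_negMulLog_div] using sum_mul_negMulLog_div_le s ha hb hab

end LogSum

end Real

theorem Finset.sum_product_self_eq_sum_diag_add_sum_offDiag {α M : Type*} [DecidableEq α]
    [AddCommMonoid M] (s : Finset α) (f : α × α → M) :
    ∑ p ∈ s ×ˢ s, f p = ∑ p ∈ s.diag, f p + ∑ p ∈ s.offDiag, f p := by
  rw [← sum_union (disjoint_diag_offDiag s), diag_union_offDiag]

theorem Finset.diag_subset_product {α : Type*} [DecidableEq α] (s : Finset α) :
    s.diag ⊆ s ×ˢ s :=
  diag_union_offDiag s ▸ subset_union_left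

theorem Finset.offDiag_subset_product {α : Type*} [DecidableEq α] (s : Finset α) :
    s.offDiag ⊆ s ×ˢ s :=
  diag_union_offDiag s ▸ subset_union_right

section Fano

variable {n : ℕ} {q : ℕ → ℕ → ℝ}

theorem condEnt_eq_sum_mul_log_div (n : ℕ) (q : ℕ → ℕ → ℝ) :
    condEnt n q = ∑ p ∈ Icc 1 n ×ˢ Icc 1 n, q p.1 p.2 * log (pXof n q p.1 / q p.1 p.2) := by
  rw [sum_product]
  refine sum_congr rfl fun x _ => ?_
  rw [mul_neg, mul_sum, ← sum_neg_distrib]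
  refine sum_congr rfl fun y _ => ?_
  rw [mul_log_div_eq_mul_negMulLog_div, negMulLog]
  ring

theorem errProb_eq_sum_offDiag (n : ℕ) (q : ℕ → ℕ → ℝ) :
    errProb n q = ∑ p ∈ (Icc 1 n).offDiag, q p.1 p.2 := by
  rw [errProb, ← sum_product' (f := fun x y => if x = y then 0 else q x y),
    sum_product_self_eq_sum_diag_add_sum_offDiag, sum_diag]
  simp only [if_true, sum_const_zero, zero_add]
  exact sum_congr rfl fun p hp => if_neg (mem_offDiag.1 hp).2.2

theorem sum_diag_eq_one_sub_errProb (hq1 : ∑ x ∈ Icc 1 n, ∑ y ∈ Icc 1 n, q x y = 1) :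
    ∑ p ∈ (Icc 1 n).diag, q p.1 p.2 = 1 - errProb n q := by
  rw [← sum_product', sum_product_self_eq_sum_diag_add_sum_offDiag] at hq1
  rw [errProb_eq_sum_offDiag]
  linarith

theorem sum_diag_pXof (hq1 : ∑ x ∈ Icc 1 n, ∑ y ∈ Icc 1 n, q x y = 1) :
    ∑ p ∈ (Icc 1 n).diag, pXof n q p.1 = 1 := by
  rw [sum_diag]
  exact hq1

theorem sum_offDiag_pXof (hq1 : ∑ x ∈ Icc 1 n, ∑ y ∈ Icc 1 n, q x y = 1) :
    ∑ p ∈ (Icc 1 n).offDiag, pXof n q p.1 = n - 1 := by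
  have h := sum_product_self_eq_sum_diag_add_sum_offDiag (Icc 1 n) fun p => pXof n q p.1
  rw [sum_product, sum_diag_pXof hq1] at h
  simp only [sum_const, Nat.card_Icc, add_tsub_cancel_right, nsmul_eq_mul, ← mul_sum] at h
  rw [show ∑ x ∈ Icc 1 n, pXof n q x = 1 from hq1] at h
  linarith

theorem nonneg_of_mem_product (hq0 : ∀ x ∈ Icc 1 n, ∀ y ∈ Icc 1 n, 0 ≤ q x y)
    {p : ℕ × ℕ} (hp : p ∈ Icc 1 n ×ˢ Icc 1 n) : 0 ≤ q p.1 p.2 :=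
  hq0 _ (mem_product.1 hp).1 _ (mem_product.1 hp).2

theorem le_pXof (hq0 : ∀ x ∈ Icc 1 n, ∀ y ∈ Icc 1 n, 0 ≤ q x y) {p : ℕ × ℕ}
    (hp : p ∈ Icc 1 n ×ˢ Icc 1 n) : q p.1 p.2 ≤ pXof n q p.1 :=
  single_le_sum (hq0 _ (mem_product.1 hp).1) (mem_product.1 hp).2

theorem sum_mul_log_pXof_div_le (hq0 : ∀ x ∈ Icc 1 n, ∀ y ∈ Icc 1 n, 0 ≤ q x y)
    {t : Finset (ℕ × ℕ)} (ht : t ⊆ Icc 1 n ×ˢ Icc 1 n) :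
    ∑ p ∈ t, q p.1 p.2 * log (pXof n q p.1 / q p.1 p.2)
      ≤ (∑ p ∈ t, q p.1 p.2)
        * log ((∑ p ∈ t, pXof n q p.1) / ∑ p ∈ t, q p.1 p.2) := by
  have hpos p (hp : p ∈ t) := nonneg_of_mem_product hq0 (ht hp)
  have hle p (hp : p ∈ t) := le_pXof hq0 (ht hp)
  exact sum_mul_log_div_le t hpos (fun p hp => (hpos p hp).trans (hle p hp))
    fun p hp h => le_antisymm (h ▸ hle p hp) (hpos p hp)

theorem errProb_nonneg (hq0 : ∀ x ∈ Icc 1 n, ∀ y ∈ Icc 1 n, 0 ≤ q x y) :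
    0 ≤ errProb n q := by
  rw [errProb_eq_sum_offDiag]
  exact sum_nonneg fun p hp => nonneg_of_mem_product hq0 (offDiag_subset_product _ hp)

theorem errProb_le_sub_one (hq0 : ∀ x ∈ Icc 1 n, ∀ y ∈ Icc 1 n, 0 ≤ q x y)
    (hq1 : ∑ x ∈ Icc 1 n, ∑ y ∈ Icc 1 n, q x y = 1) : errProb n q ≤ n - 1 := by
  rw [← sum_offDiag_pXof hq1, errProb_eq_sum_offDiag]
  exact sum_le_sum fun p hp => le_pXof hq0 (offDiag_subset_product _ hp)

end Fano

theorem traditional_fano_general (n : ℕ) (q : ℕ → ℕ → ℝ)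
    (hq0 : ∀ x ∈ Finset.Icc 1 n, ∀ y ∈ Finset.Icc 1 n, 0 ≤ q x y)
    (hq1 : ∑ x ∈ Finset.Icc 1 n, ∑ y ∈ Finset.Icc 1 n, q x y = 1) :
    condEnt n q ≤
      -(errProb n q * Real.log (errProb n q))
        - (1 - errProb n q) * Real.log (1 - errProb n q)
        + errProb n q * Real.log ((n : ℝ) - 1) := by
  have hdiag := sum_mul_log_pXof_div_le hq0 (diag_subset_product _)
  have hoff := sum_mul_log_pXof_div_le hq0 (offDiag_subset_product _)
  rw [sum_diag_eq_one_sub_errProb hq1, sum_diag_pXof hq1] at hdiag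
  rw [← errProb_eq_sum_offDiag, sum_offDiag_pXof hq1] at hoff
  rw [condEnt_eq_sum_mul_log_div, sum_product_self_eq_sum_diag_add_sum_offDiag]
  calc _ ≤ (1 - errProb n q) * log (1 / (1 - errProb n q))
        + errProb n q * log ((n - 1) / errProb n q) := add_le_add hdiag hoff
    _ = _ := by
      rw [one_div, log_inv, mul_log_div_eq_mul_log_sub_mul_log (errProb_nonneg hq0)
        (errProb_le_sub_one hq0 hq1)]
      ring

/-- (Traditional Fano inequality.) For a joint distribution `q` on `{1,…,n}²` with error
probability `E = ∑_{x≠y} q(x,y)`, the conditional Shannon entropy satisfies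
`S^{Y|X} ≤ −E ln E − (1−E) ln(1−E) + E ln(n−1)`. -/
theorem traditional_fano (n : ℕ) (hn : 1 ≤ n) (q : ℕ → ℕ → ℝ)
    (hq0 : ∀ x ∈ Finset.Icc 1 n, ∀ y ∈ Finset.Icc 1 n, 0 ≤ q x y)
    (hq1 : ∑ x ∈ Finset.Icc 1 n, ∑ y ∈ Finset.Icc 1 n, q x y = 1) :
    condEnt n q ≤
      -(errProb n q * Real.log (errProb n q))
        - (1 - errProb n q) * Real.log (1 - errProb n q)
        + errProb n q * Real.log ((n : ℝ) - 1) :=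
  traditional_fano_general n q hq0 hq1
end

section
/- (Main Theorem, bound part) Let p_0^{XY}(x,y) = δ_{x,y}p^Y(y) and let p_τ^{XY} be any joint distribution with Y-marginal p^Y, at Wasserstein distance W from p_0^{XY}. Then the decrease in mutual information satisfies |ΔI| = I_0^{X:Y} − I_τ^{X:Y} = S_τ^{Y|X} ≤ S(p̃_W^Y), where p̃_W^Y is the smoothed distribution constructed from p^Y with parameter W. -/
open Finset

-- `ME n p E` is the largest `m ∈ {2,…,n}` satisfying
-- `(E − ∑_{y=m+1}^n p(y))/(m−1) < p(m)` (and `0` if no such `m` exists).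
open Classical in
noncomputable def ME (n : ℕ) (p : ℕ → ℝ) (E : ℝ) : ℕ :=
  Nat.findGreatest
    (fun m => 2 ≤ m ∧ (E - ∑ y ∈ Finset.Icc (m + 1) n, p y) / ((m : ℝ) - 1) < p m) n

-- The smoothed distribution `p̃_E` built from a decreasing distribution `p` on `{1,…,n}`:
-- it equals `p` if `p(1) ≥ 1 − E`; otherwise `p̃_E(1) = 1 − E`, `p̃_E` takes the flat value
-- `(E − ∑_{y'=M_E+1}^n p(y'))/(M_E − 1)` on positions `2,…,M_E`, and equals `p` beyond `M_E`.
noncomputable def ptilde (n : ℕ) (p : ℕ → ℝ) (E : ℝ) : ℕ → ℝ := fun y =>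
  if 1 - E ≤ p 1 then p y
  else if y = 1 then 1 - E
  else if y ≤ ME n p E then
    (E - ∑ y' ∈ Finset.Icc (ME n p E + 1) n, p y') / ((ME n p E : ℝ) - 1)
  else p y

-- Shannon entropy (natural logarithm) of a distribution on `{1,…,n}`.
noncomputable def ent (n : ℕ) (q : ℕ → ℝ) : ℝ :=
  -∑ y ∈ Finset.Icc 1 n, q y * Real.log (q y)

-- Joint Shannon entropy of a joint distribution on `{1,…,n}²`.
noncomputable def jointEnt (n : ℕ) (r : ℕ → ℕ → ℝ) : ℝ :=
  -∑ x ∈ Finset.Icc 1 n, ∑ y ∈ Finset.Icc 1 n, r x y * Real.log (r x y)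

lemma gibbs (s : Finset ℕ) (q r : ℕ → ℝ) (hq : ∀ y ∈ s, 0 ≤ q y)
    (hr : ∀ y ∈ s, 0 ≤ r y) (hpos : ∀ y ∈ s, 0 < q y → 0 < r y)
    (hsum : ∑ y ∈ s, r y ≤ ∑ y ∈ s, q y) :
    -∑ y ∈ s, q y * Real.log (q y) ≤ -∑ y ∈ s, q y * Real.log (r y) := by
  have key : ∑ y ∈ s, (q y * Real.log (r y) - q y * Real.log (q y)) ≤
      ∑ y ∈ s, (r y - q y) := by
    apply Finset.sum_le_sum
    intro y hy
    rcases eq_or_lt_of_le (hq y hy) with h0 | h0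
    · simp [← h0, hr y hy]
    · have hrpos := hpos y hy h0
      have hlog : Real.log (r y / q y) ≤ r y / q y - 1 :=
        Real.log_le_sub_one_of_pos (by positivity)
      rw [Real.log_div (ne_of_gt hrpos) (ne_of_gt h0)] at hlog
      have := mul_le_mul_of_nonneg_left hlog (le_of_lt h0)
      calc q y * Real.log (r y) - q y * Real.log (q y)
          = q y * (Real.log (r y) - Real.log (q y)) := by ring
        _ ≤ q y * (r y / q y - 1) := this
        _ = r y - q y := by field_simp
  rw [Finset.sum_sub_distrib] at key
  rw [Finset.sum_sub_distrib] at key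
  linarith

lemma transport {n : ℕ} {σ : ℕ → ℕ} (hσ : Set.BijOn σ (Set.Icc 1 n) (Set.Icc 1 n))
    (g : ℕ → ℝ) (P : ℕ → Prop) [DecidablePred P] :
    ∑ y ∈ (Finset.Icc 1 n).filter (fun y => P (σ y)), g (σ y) =
      ∑ i ∈ (Finset.Icc 1 n).filter P, g i := by
  apply Finset.sum_bij (fun y _ => σ y)
  · intro a ha
    simp only [Finset.mem_filter, Finset.mem_Icc] at ha ⊢
    have := hσ.mapsTo (Set.mem_Icc.mpr ⟨ha.1.1, ha.1.2⟩)
    exact ⟨Set.mem_Icc.mp this, ha.2⟩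
  · intro a ha b hb h
    simp only [Finset.mem_filter, Finset.mem_Icc] at ha hb
    exact hσ.injOn (Set.mem_Icc.mpr ha.1) (Set.mem_Icc.mpr hb.1) h
  · intro i hi
    simp only [Finset.mem_filter, Finset.mem_Icc] at hi
    obtain ⟨y, hy, hyi⟩ := hσ.surjOn (Set.mem_Icc.mpr hi.1)
    refine ⟨y, ?_, hyi⟩
    simp only [Finset.mem_filter, Finset.mem_Icc]
    exact ⟨Set.mem_Icc.mp hy, by rw [hyi]; exact hi.2⟩
  · intro a ha; rfl

lemma transport' {n : ℕ} {σ : ℕ → ℕ} (hσ : Set.BijOn σ (Set.Icc 1 n) (Set.Icc 1 n))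
    (g : ℕ → ℝ) :
    ∑ y ∈ Finset.Icc 1 n, g (σ y) = ∑ i ∈ Finset.Icc 1 n, g i := by
  classical
  have := transport hσ g (fun _ => True)
  simpa using this

lemma condEnt_le_CE (n : ℕ) (pτ : ℕ → ℕ → ℝ)
    (h0 : ∀ x ∈ Finset.Icc 1 n, ∀ y ∈ Finset.Icc 1 n, 0 ≤ pτ x y)
    (r : ℕ → ℕ → ℝ)
    (hr0 : ∀ x ∈ Finset.Icc 1 n, ∀ y ∈ Finset.Icc 1 n, 0 ≤ r x y)
    (hpos : ∀ x ∈ Finset.Icc 1 n, ∀ y ∈ Finset.Icc 1 n, 0 < pτ x y → 0 < r x y)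
    (hrsum : ∀ x ∈ Finset.Icc 1 n, ∑ y ∈ Finset.Icc 1 n, r x y ≤ 1) :
    condEnt n pτ ≤ -∑ x ∈ Finset.Icc 1 n, ∑ y ∈ Finset.Icc 1 n,
      pτ x y * Real.log (r x y) := by
  unfold condEnt
  rw [neg_eq_neg_one_mul, Finset.mul_sum]
  apply Finset.sum_le_sum
  intro x hx
  have hpX0 : 0 ≤ pXof n pτ x := Finset.sum_nonneg (fun y hy => h0 x hx y hy)
  rcases eq_or_lt_of_le hpX0 with hz | hz
  · have hall : ∀ y ∈ Finset.Icc 1 n, pτ x y = 0 := by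
      intro y hy
      exact (Finset.sum_eq_zero_iff_of_nonneg (fun y hy => h0 x hx y hy)).mp hz.symm y hy
    have h1 : ∑ y ∈ Finset.Icc 1 n, pτ x y * Real.log (r x y) = 0 :=
      Finset.sum_eq_zero (fun y hy => by rw [hall y hy]; ring)
    rw [← hz, h1]
    simp
  · have hne : pXof n pτ x ≠ 0 := ne_of_gt hz
    have hq1 : ∑ y ∈ Finset.Icc 1 n, pτ x y / pXof n pτ x = 1 := by
      rw [← Finset.sum_div]; exact div_self hne
    have hg := gibbs (Finset.Icc 1 n) (fun y => pτ x y / pXof n pτ x) (fun y => r x y)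
      (fun y hy => div_nonneg (h0 x hx y hy) hpX0)
      (fun y hy => hr0 x hx y hy)
      (fun y hy hqy => hpos x hx y hy (by
        by_contra hle
        push_neg at hle
        have h00 : pτ x y = 0 := le_antisymm hle (h0 x hx y hy)
        rw [h00, zero_div] at hqy
        exact lt_irrefl 0 hqy))
      (by rw [hq1]; exact hrsum x hx)
    have hmul := mul_le_mul_of_nonneg_left hg hpX0
    calc pXof n pτ x * -∑ y ∈ Finset.Icc 1 n,
          pτ x y / pXof n pτ x * Real.log (pτ x y / pXof n pτ x)
        ≤ pXof n pτ x * -∑ y ∈ Finset.Icc 1 n,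
          pτ x y / pXof n pτ x * Real.log (r x y) := hmul
      _ = -1 * ∑ y ∈ Finset.Icc 1 n, pτ x y * Real.log (r x y) := by
          rw [Finset.sum_congr rfl (fun y hy =>
            (by ring : pτ x y / pXof n pτ x * Real.log (r x y)
              = pτ x y * Real.log (r x y) / pXof n pτ x)),
            ← Finset.sum_div, mul_neg, mul_div_cancel₀ _ hne]
          ring
lemma chain_rule (n : ℕ) (pτ : ℕ → ℕ → ℝ)
    (h0 : ∀ x ∈ Finset.Icc 1 n, ∀ y ∈ Finset.Icc 1 n, 0 ≤ pτ x y) :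
    condEnt n pτ = jointEnt n pτ - ent n (pXof n pτ) := by
  have key : ∀ x ∈ Finset.Icc 1 n,
      pXof n pτ x * (-∑ y ∈ Finset.Icc 1 n,
        (pτ x y / pXof n pτ x) * Real.log (pτ x y / pXof n pτ x)) =
      (-∑ y ∈ Finset.Icc 1 n, pτ x y * Real.log (pτ x y)) +
        pXof n pτ x * Real.log (pXof n pτ x) := by
    intro x hx
    have hpX0 : 0 ≤ pXof n pτ x := Finset.sum_nonneg (fun y hy => h0 x hx y hy)
    rcases eq_or_lt_of_le hpX0 with hz | hz
    · have hall : ∀ y ∈ Finset.Icc 1 n, pτ x y = 0 := by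
        intro y hy
        exact (Finset.sum_eq_zero_iff_of_nonneg (fun y hy => h0 x hx y hy)).mp hz.symm y hy
      have h1 : ∑ y ∈ Finset.Icc 1 n, pτ x y * Real.log (pτ x y) = 0 :=
        Finset.sum_eq_zero (fun y hy => by rw [hall y hy]; ring)
      rw [← hz, h1]
      simp
    · have hne : pXof n pτ x ≠ 0 := ne_of_gt hz
      have hterm : ∀ y ∈ Finset.Icc 1 n,
          (pτ x y / pXof n pτ x) * Real.log (pτ x y / pXof n pτ x) =
          (pτ x y * Real.log (pτ x y) - pτ x y * Real.log (pXof n pτ x)) / pXof n pτ x := by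
        intro y hy
        rcases eq_or_lt_of_le (h0 x hx y hy) with h00 | h00
        · rw [← h00]; simp
        · rw [Real.log_div (ne_of_gt h00) hne]
          field_simp
      rw [Finset.sum_congr rfl hterm, ← Finset.sum_div, mul_neg, mul_div_cancel₀ _ hne,
        Finset.sum_sub_distrib, ← Finset.sum_mul]
      show -(∑ y ∈ Finset.Icc 1 n, pτ x y * Real.log (pτ x y)
        - (pXof n pτ x) * Real.log (pXof n pτ x)) = _
      ring
  unfold condEnt jointEnt ent
  rw [Finset.sum_congr rfl key, Finset.sum_add_distrib]
  rw [← Finset.sum_neg_distrib]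
  ring
lemma W_bounds (n : ℕ) (pτ : ℕ → ℕ → ℝ) (pY : ℕ → ℝ)
    (d : ℕ × ℕ → ℕ × ℕ → ℝ)
    (hd0 : ∀ z, d z z = 0)
    (hd1 : ∀ z z' : ℕ × ℕ, z ≠ z' → 1 ≤ d z z')
    (W : ℝ)
    (π : ℕ × ℕ → ℕ × ℕ → ℝ)
    (hπ0 : ∀ z z', 0 ≤ π z z')
    (hπcol : ∀ z' ∈ Finset.Icc 1 n ×ˢ Finset.Icc 1 n,
        ∑ z ∈ Finset.Icc 1 n ×ˢ Finset.Icc 1 n, π z z' =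
          if z'.1 = z'.2 then pY z'.2 else 0)
    (hπrow : ∀ z ∈ Finset.Icc 1 n ×ˢ Finset.Icc 1 n,
        ∑ z' ∈ Finset.Icc 1 n ×ˢ Finset.Icc 1 n, π z z' = pτ z.1 z.2)
    (hπcost : (∑ z ∈ Finset.Icc 1 n ×ˢ Finset.Icc 1 n,
        ∑ z' ∈ Finset.Icc 1 n ×ˢ Finset.Icc 1 n, d z z' * π z z') = W) :
    errProb n pτ ≤ W ∧ 0 ≤ W := by
  have hd_nn : ∀ z z', 0 ≤ d z z' := by
    intro z z'
    rcases eq_or_ne z z' with h | h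
    · rw [h, hd0]
    · linarith [hd1 z z' h]
  constructor
  · have hE_eq : errProb n pτ = ∑ z ∈ Finset.Icc 1 n ×ˢ Finset.Icc 1 n,
        (if z.1 = z.2 then 0 else pτ z.1 z.2) := by
      rw [Finset.sum_product]; rfl
    rw [hE_eq, ← hπcost]
    apply Finset.sum_le_sum
    intro z hz
    by_cases hdiag : z.1 = z.2
    · rw [if_pos hdiag]
      exact Finset.sum_nonneg (fun z' _ => mul_nonneg (hd_nn z z') (hπ0 z z'))
    · rw [if_neg hdiag, ← hπrow z hz]
      apply Finset.sum_le_sum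
      intro z' hz'
      rcases eq_or_ne z' z with h | h
      · subst h
        have hzz : π z' z' = 0 := by
          have hcol := hπcol z' hz'
          rw [if_neg hdiag] at hcol
          exact (Finset.sum_eq_zero_iff_of_nonneg (fun w _ => hπ0 w z')).mp hcol z' hz'
        rw [hzz, hd0]
        simp
      · calc π z z' = 1 * π z z' := by ring
          _ ≤ d z z' * π z z' := by
              apply mul_le_mul_of_nonneg_right (hd1 z z' (Ne.symm h)) (hπ0 z z')
  · rw [← hπcost]
    exact Finset.sum_nonneg fun z _ => Finset.sum_nonneg
      (fun z' _ => mul_nonneg (hd_nn z z') (hπ0 z z'))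
lemma sum_Icc_split_bot (a b : ℕ) (h : a ≤ b) (f : ℕ → ℝ) :
    ∑ i ∈ Finset.Icc a b, f i = f a + ∑ i ∈ Finset.Icc (a+1) b, f i := by
  rw [Finset.Icc_add_one_left_eq_Ioc, ← Finset.Icc_erase_left,
    Finset.add_sum_erase _ f (Finset.mem_Icc.mpr ⟨le_refl a, h⟩)]

lemma ent_nonneg (n : ℕ) (q : ℕ → ℝ)
    (h : ∀ y ∈ Finset.Icc 1 n, 0 ≤ q y ∧ q y ≤ 1) : 0 ≤ ent n q := by
  unfold ent
  rw [neg_nonneg]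
  apply Finset.sum_nonpos
  intro y hy
  exact mul_nonpos_of_nonneg_of_nonpos (h y hy).1 (Real.log_nonpos (h y hy).1 (h y hy).2)

open Classical in
lemma ME_spec (n : ℕ) (p : ℕ → ℝ) (E : ℝ) (h2 : 2 ≤ n)
    (hP2 : E - ∑ y ∈ Finset.Icc 3 n, p y < p 2) :
    2 ≤ ME n p E ∧ ME n p E ≤ n ∧
      (E - ∑ y ∈ Finset.Icc (ME n p E + 1) n, p y) / ((ME n p E : ℝ) - 1)
        < p (ME n p E) ∧
      ∀ m, ME n p E < m → m ≤ n →
        p m ≤ (E - ∑ y ∈ Finset.Icc (m + 1) n, p y) / ((m : ℝ) - 1) := by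
  have hP2' : (fun m : ℕ => 2 ≤ m ∧
      (E - ∑ y ∈ Finset.Icc (m + 1) n, p y) / ((m : ℝ) - 1) < p m) 2 := by
    refine ⟨le_refl 2, ?_⟩
    norm_num
    exact hP2
  unfold ME
  refine ⟨Nat.le_findGreatest (P := fun m : ℕ => 2 ≤ m ∧
      (E - ∑ y ∈ Finset.Icc (m + 1) n, p y) / ((m : ℝ) - 1) < p m) h2 hP2',
    Nat.findGreatest_le n,
    (Nat.findGreatest_spec (P := fun m : ℕ => 2 ≤ m ∧
      (E - ∑ y ∈ Finset.Icc (m + 1) n, p y) / ((m : ℝ) - 1) < p m) h2 hP2').2, ?_⟩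
  intro m h1 h2'
  have hng := Nat.findGreatest_is_greatest (P := fun m : ℕ => 2 ≤ m ∧
      (E - ∑ y ∈ Finset.Icc (m + 1) n, p y) / ((m : ℝ) - 1) < p m) h1 h2'
  by_contra hc
  exact hng ⟨le_trans (Nat.le_findGreatest h2 hP2') (le_of_lt h1), lt_of_not_ge hc⟩

set_option maxHeartbeats 1000000 in
/-- (Main theorem, bound part.) Let `p₀(x,y) = δ_{x,y} p^Y(y)` and let `p_τ` be any joint
distribution with `Y`-marginal `p^Y`, at Wasserstein distance `W` from `p₀` (witnessed by a
minimal-cost transport plan, where transport is only within fixed `y` and off-diagonal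
costs are `≥ 1`). Then the consumed mutual information satisfies
`|ΔI| = I₀ − I_τ = S_τ^{Y|X} ≤ S(p̃_W^Y)`, where `p̃_W^Y` is the smoothing of `p^Y`
(with decreasing rearrangement `pd`, witnessed by the bijection `σ`) at level `W`. -/
theorem main_theorem_bound (n : ℕ) (hn : 1 ≤ n)
    (pY : ℕ → ℝ) (hpY0 : ∀ y ∈ Finset.Icc 1 n, 0 ≤ pY y)
    (hpY1 : ∑ y ∈ Finset.Icc 1 n, pY y = 1)
    (pd : ℕ → ℝ) (σ : ℕ → ℕ)
    (hσ : Set.BijOn σ (Set.Icc 1 n) (Set.Icc 1 n))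
    (hsort : ∀ y ∈ Finset.Icc 1 n, pY y = pd (σ y))
    (hdec : ∀ y ∈ Finset.Icc 1 n, ∀ z ∈ Finset.Icc 1 n, y ≤ z → pd z ≤ pd y)
    (pτ : ℕ → ℕ → ℝ)
    (hpτ0 : ∀ x ∈ Finset.Icc 1 n, ∀ y ∈ Finset.Icc 1 n, 0 ≤ pτ x y)
    (hmarg : ∀ y ∈ Finset.Icc 1 n, ∑ x ∈ Finset.Icc 1 n, pτ x y = pY y)
    (d : ℕ × ℕ → ℕ × ℕ → ℝ)
    (hd0 : ∀ z, d z z = 0)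
    (hd1 : ∀ z z' : ℕ × ℕ, z ≠ z' → 1 ≤ d z z')
    (W : ℝ)
    (hW_achieved : ∃ π : ℕ × ℕ → ℕ × ℕ → ℝ,
      (∀ z z', 0 ≤ π z z') ∧
      (∀ z z' : ℕ × ℕ, z.2 ≠ z'.2 → π z z' = 0) ∧
      (∀ z' ∈ Finset.Icc 1 n ×ˢ Finset.Icc 1 n,
        ∑ z ∈ Finset.Icc 1 n ×ˢ Finset.Icc 1 n, π z z' =
          if z'.1 = z'.2 then pY z'.2 else 0) ∧
      (∀ z ∈ Finset.Icc 1 n ×ˢ Finset.Icc 1 n,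
        ∑ z' ∈ Finset.Icc 1 n ×ˢ Finset.Icc 1 n, π z z' = pτ z.1 z.2) ∧
      (∑ z ∈ Finset.Icc 1 n ×ˢ Finset.Icc 1 n,
        ∑ z' ∈ Finset.Icc 1 n ×ˢ Finset.Icc 1 n, d z z' * π z z') = W)
    (hW_min : ∀ π : ℕ × ℕ → ℕ × ℕ → ℝ,
      (∀ z z', 0 ≤ π z z') →
      (∀ z z' : ℕ × ℕ, z.2 ≠ z'.2 → π z z' = 0) →
      (∀ z' ∈ Finset.Icc 1 n ×ˢ Finset.Icc 1 n,
        ∑ z ∈ Finset.Icc 1 n ×ˢ Finset.Icc 1 n, π z z' =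
          if z'.1 = z'.2 then pY z'.2 else 0) →
      (∀ z ∈ Finset.Icc 1 n ×ˢ Finset.Icc 1 n,
        ∑ z' ∈ Finset.Icc 1 n ×ˢ Finset.Icc 1 n, π z z' = pτ z.1 z.2) →
      W ≤ ∑ z ∈ Finset.Icc 1 n ×ˢ Finset.Icc 1 n,
        ∑ z' ∈ Finset.Icc 1 n ×ˢ Finset.Icc 1 n, d z z' * π z z') :
    (ent n pY - (ent n (pXof n pτ) + ent n pY - jointEnt n pτ) = condEnt n pτ) ∧
      condEnt n pτ ≤ ent n (ptilde n pd W) := by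
  constructor
  · rw [chain_rule n pτ hpτ0]; ring
  · clear hW_min
    obtain ⟨π, hπ0, hπfix, hπcol, hπrow, hπcost⟩ := hW_achieved
    obtain ⟨hEW, hW0⟩ := W_bounds n pτ pY d hd0 hd1 W π hπ0 hπcol hπrow hπcost
    clear hπ0 hπfix hπcol hπrow hπcost hd0 hd1
    set E := errProb n pτ with hEdef
    have h1I : 1 ∈ Finset.Icc 1 n := Finset.mem_Icc.mpr ⟨le_refl 1, hn⟩
    have hE0 : 0 ≤ E := by
      rw [hEdef]
      apply Finset.sum_nonneg
      intro x hx
      apply Finset.sum_nonneg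
      intro y hy
      by_cases h : x = y
      · simp [h]
      · simp only [if_neg h]; exact hpτ0 x hx y hy
    have htot : ∑ x ∈ Finset.Icc 1 n, ∑ y ∈ Finset.Icc 1 n, pτ x y = 1 := by
      rw [Finset.sum_comm, Finset.sum_congr rfl hmarg, hpY1]
    have hdiagE : ∑ x ∈ Finset.Icc 1 n, pτ x x = 1 - E := by
      have hsplit : ∀ x ∈ Finset.Icc 1 n, ∑ y ∈ Finset.Icc 1 n, pτ x y =
          pτ x x + ∑ y ∈ Finset.Icc 1 n, (if x = y then 0 else pτ x y) := by
        intro x hx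
        have : ∀ y ∈ Finset.Icc 1 n, pτ x y =
            (if x = y then pτ x y else 0) + (if x = y then 0 else pτ x y) := by
          intro y hy; by_cases h : x = y <;> simp [h]
        rw [Finset.sum_congr rfl this, Finset.sum_add_distrib, Finset.sum_ite_eq,
          if_pos hx]
      rw [Finset.sum_congr rfl hsplit, Finset.sum_add_distrib] at htot
      have hEexp : E = ∑ x ∈ Finset.Icc 1 n, ∑ y ∈ Finset.Icc 1 n,
          (if x = y then 0 else pτ x y) := hEdef
      linarith
    have hpd0 : ∀ i ∈ Finset.Icc 1 n, 0 ≤ pd i := by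
      intro i hi
      obtain ⟨y, hy, hyi⟩ := hσ.surjOn (Set.mem_Icc.mpr (Finset.mem_Icc.mp hi))
      have hyI : y ∈ Finset.Icc 1 n := Finset.mem_Icc.mpr (Set.mem_Icc.mp hy)
      rw [← hyi, ← hsort y hyI]
      exact hpY0 y hyI
    have hpdsum : ∑ i ∈ Finset.Icc 1 n, pd i = 1 := by
      rw [← transport' hσ pd, ← Finset.sum_congr rfl hsort, hpY1]
    have hpd_le1 : ∀ i ∈ Finset.Icc 1 n, pd i ≤ pd 1 := by
      intro i hi
      exact hdec 1 h1I i hi (Finset.mem_Icc.mp hi).1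
    have hpd1_le1 : pd 1 ≤ 1 := by
      rw [← hpdsum]
      exact Finset.single_le_sum hpd0 h1I
    by_cases hb : 1 - W ≤ pd 1
    · -- first branch: ptilde = pd
      have hptd1 : ent n (ptilde n pd W) = ent n pd := by
        unfold ent
        congr 1
        apply Finset.sum_congr rfl
        intro y _
        simp only [ptilde, if_pos hb]
      have hptd2 : ent n pY = ent n pd := by
        unfold ent
        congr 1
        calc ∑ y ∈ Finset.Icc 1 n, pY y * Real.log (pY y)
            = ∑ y ∈ Finset.Icc 1 n,
              (fun i => pd i * Real.log (pd i)) (σ y) := by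
              apply Finset.sum_congr rfl
              intro y hy
              show pY y * Real.log (pY y) = pd (σ y) * Real.log (pd (σ y))
              rw [hsort y hy]
          _ = ∑ i ∈ Finset.Icc 1 n, pd i * Real.log (pd i) :=
              transport' hσ (fun i => pd i * Real.log (pd i))
      rw [hptd1.trans hptd2.symm]
      have hCE := condEnt_le_CE n pτ hpτ0 (fun _ y => pY y)
        (fun x hx y hy => hpY0 y hy)
        (fun x hx y hy hpos => lt_of_lt_of_le hpos (by
          show pτ x y ≤ pY y
          rw [← hmarg y hy]
          exact Finset.single_le_sum (fun x' hx' => hpτ0 x' hx' y hy) hx))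
        (fun x hx => le_of_eq hpY1)
      refine le_trans hCE (le_of_eq ?_)
      unfold ent
      congr 1
      rw [Finset.sum_comm]
      apply Finset.sum_congr rfl
      intro y hy
      rw [← Finset.sum_mul, hmarg y hy]
    · push_neg at hb
      have hpd1_0 : 0 ≤ pd 1 := hpd0 1 h1I
      have h1W_pos : 0 < 1 - W := lt_of_le_of_lt hpd1_0 hb
      have h2n : 2 ≤ n := by
        rcases Nat.lt_or_ge n 2 with h | h
        · exfalso
          have hn1 : n = 1 := by omega
          subst hn1
          simp only [Finset.Icc_self, Finset.sum_singleton] at hpdsum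
          rw [hpdsum] at hb
          linarith
        · exact h
      obtain ⟨hM2, hMn, hPM, hnotP⟩ := ME_spec n pd W h2n (by
        have hs : ∑ i ∈ Finset.Icc 2 n, pd i = pd 2 + ∑ i ∈ Finset.Icc 3 n, pd i :=
          sum_Icc_split_bot 2 n h2n pd
        have hs1 : ∑ i ∈ Finset.Icc 1 n, pd i = pd 1 + ∑ i ∈ Finset.Icc 2 n, pd i :=
          sum_Icc_split_bot 1 n hn pd
        rw [hpdsum] at hs1
        linarith)
      set M := ME n pd W with hMdef
      set T := ∑ i ∈ Finset.Icc (M + 1) n, pd i with hTdef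
      set c := (W - T) / ((M : ℝ) - 1) with hcdef
      have hMR : (0:ℝ) < (M:ℝ) - 1 := by
        have : (2:ℝ) ≤ (M:ℝ) := by exact_mod_cast hM2
        linarith
      have hcMT : ((M:ℝ) - 1) * c = W - T := by
        rw [hcdef]; field_simp
      have hcge : ∀ i, M + 1 ≤ i → i ≤ n → pd i ≤ c := by
        intro i hi1 hi2
        have hMn' : M + 1 ≤ n := le_trans hi1 hi2
        have hfail2 := hnotP (M + 1) (by omega) hMn'
        have hTsplit : T = pd (M + 1) + ∑ i ∈ Finset.Icc (M + 1 + 1) n, pd i := by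
          rw [hTdef]
          exact sum_Icc_split_bot (M + 1) n hMn' pd
        have hcast : ((M + 1 : ℕ) : ℝ) - 1 = (M : ℝ) := by push_cast; ring
        rw [hcast] at hfail2
        have hMpos : (0:ℝ) < (M:ℝ) := by linarith
        rw [le_div_iff₀ hMpos] at hfail2
        have hpdM1c : pd (M + 1) ≤ c := by
          rw [hcdef, le_div_iff₀ hMR]
          nlinarith [hfail2, hTsplit]
        calc pd i ≤ pd (M + 1) := hdec (M + 1) (Finset.mem_Icc.mpr ⟨by omega, hMn'⟩)
              i (Finset.mem_Icc.mpr ⟨by omega, hi2⟩) hi1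
          _ ≤ c := hpdM1c
      have hc0 : 0 ≤ c := by
        by_cases hMeq : M = n
        · rw [hcdef, hTdef, hMeq]
          rw [Finset.Icc_eq_empty (by omega), Finset.sum_empty]
          have hn2R : (2:ℝ) ≤ (n:ℝ) := by exact_mod_cast h2n
          apply div_nonneg <;> linarith
        · have hMn' : M + 1 ≤ n := by omega
          have h1 := hcge (M + 1) (le_refl _) hMn'
          have h2 := hpd0 (M + 1) (Finset.mem_Icc.mpr ⟨by omega, hMn'⟩)
          linarith
      have hpdM_le : pd M ≤ pd 1 := hpd_le1 M (Finset.mem_Icc.mpr ⟨by omega, hMn⟩)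
      have hc_lt : c < 1 - W := by linarith
      -- evaluation of ptilde
      have hnb : ¬ (1 - W ≤ pd 1) := not_le.mpr hb
      have hpt1 : ptilde n pd W 1 = 1 - W := by
        simp [ptilde, hnb]
      have hptflat : ∀ y, y ≠ 1 → y ≤ M → ptilde n pd W y = c := by
        intro y h1 h2
        simp only [ptilde, if_neg hnb, if_neg h1, ← hMdef, if_pos h2, ← hTdef, ← hcdef]
      have hpttail : ∀ y, y ≠ 1 → M < y → ptilde n pd W y = pd y := by
        intro y h1 h2
        simp only [ptilde, if_neg hnb, if_neg h1, ← hMdef, if_neg (not_le.mpr h2)]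
      have hIcc2 : Finset.Icc 2 n = Finset.Icc 2 M ∪ Finset.Icc (M+1) n := by
        ext i
        simp only [Finset.mem_union, Finset.mem_Icc]
        omega
      have hdisj : Disjoint (Finset.Icc 2 M) (Finset.Icc (M+1) n) := by
        rw [Finset.disjoint_left]
        intro i hi1 hi2
        simp only [Finset.mem_Icc] at hi1 hi2
        omega
      have Hent : ent n (ptilde n pd W) =
          -((1 - W) * Real.log (1 - W)) - ((M:ℝ) - 1) * (c * Real.log c) -
            ∑ i ∈ Finset.Icc (M+1) n, pd i * Real.log (pd i) := by
        unfold ent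
        rw [sum_Icc_split_bot 1 n hn, hIcc2, Finset.sum_union hdisj, hpt1]
        have hfl : ∑ i ∈ Finset.Icc 2 M, ptilde n pd W i * Real.log (ptilde n pd W i)
            = ((M:ℝ) - 1) * (c * Real.log c) := by
          rw [Finset.sum_congr rfl (fun i hi => by
            have hi' := Finset.mem_Icc.mp hi
            rw [hptflat i (by omega) hi'.2])]
          rw [Finset.sum_const, nsmul_eq_mul, Nat.card_Icc]
          congr 1
          have : M + 1 - 2 = M - 1 := by omega
          rw [this]
          push_cast [Nat.cast_sub (by omega : 1 ≤ M)]
          ring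
        have htl : ∑ i ∈ Finset.Icc (M+1) n, ptilde n pd W i * Real.log (ptilde n pd W i)
            = ∑ i ∈ Finset.Icc (M+1) n, pd i * Real.log (pd i) := by
          apply Finset.sum_congr rfl
          intro i hi
          have hi' := Finset.mem_Icc.mp hi
          rw [hpttail i (by omega) (by omega)]
        rw [hfl, htl]
        ring
      -- entries of ptilde and split into E=0 / E>0 cases
      by_cases hEpos : E ≤ 0
      · -- degenerate case E = 0 : condEnt ≤ 0 ≤ ent
        have hEzero : E = 0 := le_antisymm hEpos hE0
        have hEexp : ∑ x ∈ Finset.Icc 1 n, ∑ y ∈ Finset.Icc 1 n,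
            (if x = y then 0 else pτ x y) = 0 := by
          have h : errProb n pτ = 0 := by rw [← hEdef]; exact hEzero
          exact h
        have hinn : ∀ x ∈ Finset.Icc 1 n, ∀ y ∈ Finset.Icc 1 n,
            (0:ℝ) ≤ if x = y then 0 else pτ x y := by
          intro x hx y hy
          by_cases h : x = y
          · simp [h]
          · simp only [if_neg h]; exact hpτ0 x hx y hy
        have hoff : ∀ x ∈ Finset.Icc 1 n, ∀ y ∈ Finset.Icc 1 n, x ≠ y → pτ x y = 0 := by
          intro x hx y hy hxy
          have h1 := (Finset.sum_eq_zero_iff_of_nonneg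
            (fun x hx => Finset.sum_nonneg (fun y hy => hinn x hx y hy))).mp hEexp x hx
          have h2 := (Finset.sum_eq_zero_iff_of_nonneg (fun y hy => hinn x hx y hy)).mp h1 y hy
          rw [if_neg hxy] at h2
          exact h2
        have hcond0 : condEnt n pτ ≤ 0 := by
          have h := condEnt_le_CE n pτ hpτ0 (fun x y => if x = y then 1 else 0)
            (fun x hx y hy => by by_cases h : x = y <;> simp [h])
            (fun x hx y hy hp => by
              by_cases h : x = y
              · simp [h]
              · exact absurd (hoff x hx y hy h) (ne_of_gt hp))
            (fun x hx => by
              rw [Finset.sum_ite_eq, if_pos hx])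
          refine le_trans h (le_of_eq ?_)
          rw [neg_eq_zero]
          apply Finset.sum_eq_zero
          intro x hx
          apply Finset.sum_eq_zero
          intro y hy
          by_cases h : x = y
          · simp [h]
          · rw [hoff x hx y hy h]; ring
        refine le_trans hcond0 (ent_nonneg n _ ?_)
        intro y hy
        have hy' := Finset.mem_Icc.mp hy
        by_cases h1 : y = 1
        · subst h1; rw [hpt1]; constructor <;> linarith
        · by_cases h2 : y ≤ M
          · rw [hptflat y h1 h2]; exact ⟨hc0, by linarith⟩
          · push_neg at h2
            rw [hpttail y h1 h2]
            exact ⟨hpd0 y hy, le_trans (hpd_le1 y hy) hpd1_le1⟩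
      · push_neg at hEpos
        have hcpos : 0 < c := by
          rcases eq_or_lt_of_le hc0 with h | h
          · exfalso
            have hWT : W - T = 0 := by rw [← hcMT, ← h]; ring
            by_cases hMeq : M = n
            · have hT0 : T = 0 := by
                rw [hTdef, hMeq, Finset.Icc_eq_empty (by omega), Finset.sum_empty]
              linarith
            · have hT0 : T = 0 := by
                rw [hTdef]
                apply Finset.sum_eq_zero
                intro i hi
                have hi' := Finset.mem_Icc.mp hi
                have ha := hcge i hi'.1 hi'.2
                have hb2 := hpd0 i (Finset.mem_Icc.mpr ⟨by omega, hi'.2⟩)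
                linarith
              linarith
          · exact h
        set v : ℕ → ℝ := fun y => if σ y ≤ M then c else pY y with hvdef
        set r : ℕ → ℕ → ℝ := fun x y => if y = x then 1 - W - c + v x else v y with hrdef
        have hvflat : ∀ y, σ y ≤ M → v y = c := fun y h => by
          simp only [hvdef]; rw [if_pos h]
        have hvtail : ∀ y, ¬ σ y ≤ M → v y = pY y := fun y h => by
          simp only [hvdef]; rw [if_neg h]
        have hrdiag : ∀ x, r x x = 1 - W - c + v x := fun x => by
          simp only [hrdef]; simp
        have hroff : ∀ x y, y ≠ x → r x y = v y := fun x y h => by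
          simp only [hrdef]; rw [if_neg h]
        have hv0 : ∀ y ∈ Finset.Icc 1 n, 0 ≤ v y := by
          intro y hy
          by_cases h : σ y ≤ M
          · rw [hvflat y h]; exact hc0
          · rw [hvtail y h]; exact hpY0 y hy
        have hfltIcc : (Finset.Icc 1 n).filter (fun i => i ≤ M) = Finset.Icc 1 M := by
          ext i
          simp only [Finset.mem_filter, Finset.mem_Icc]
          omega
        have htlIcc : (Finset.Icc 1 n).filter (fun i => ¬ i ≤ M) = Finset.Icc (M+1) n := by
          ext i
          simp only [Finset.mem_filter, Finset.mem_Icc, not_le]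
          omega
        have hvsum : ∑ y ∈ Finset.Icc 1 n, v y = (M:ℝ) * c + T := by
          rw [← Finset.sum_filter_add_sum_filter_not (Finset.Icc 1 n) (fun y => σ y ≤ M) v]
          congr 1
          · calc ∑ y ∈ (Finset.Icc 1 n).filter (fun y => σ y ≤ M), v y
                = ∑ y ∈ (Finset.Icc 1 n).filter (fun y => σ y ≤ M), (fun _ => c) (σ y) :=
                  Finset.sum_congr rfl (fun y hy => hvflat y (Finset.mem_filter.mp hy).2)
              _ = ∑ i ∈ (Finset.Icc 1 n).filter (fun i => i ≤ M), c :=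
                  transport hσ (fun _ => c) (fun i => i ≤ M)
              _ = (M:ℝ) * c := by
                  rw [hfltIcc, Finset.sum_const, Nat.card_Icc,
                    show M + 1 - 1 = M from by omega, nsmul_eq_mul]
          · calc ∑ y ∈ (Finset.Icc 1 n).filter (fun y => ¬ σ y ≤ M), v y
                = ∑ y ∈ (Finset.Icc 1 n).filter (fun y => ¬ σ y ≤ M), (fun i => pd i) (σ y) := by
                  apply Finset.sum_congr rfl
                  intro y hy
                  have hy' := Finset.mem_filter.mp hy
                  show v y = pd (σ y)
                  rw [hvtail y hy'.2, hsort y hy'.1]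
              _ = ∑ i ∈ (Finset.Icc 1 n).filter (fun i => ¬ i ≤ M), pd i :=
                  transport hσ pd (fun i => ¬ i ≤ M)
              _ = T := by rw [htlIcc, hTdef]
        have hrsum : ∀ x ∈ Finset.Icc 1 n, ∑ y ∈ Finset.Icc 1 n, r x y = 1 := by
          intro x hx
          rw [← Finset.add_sum_erase _ _ hx]
          have h2 : ∑ y ∈ (Finset.Icc 1 n).erase x, r x y
              = (∑ y ∈ Finset.Icc 1 n, v y) - v x := by
            rw [Finset.sum_congr rfl (fun y hy => hroff x y (Finset.ne_of_mem_erase hy)),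
              Finset.sum_erase_eq_sub hx]
          rw [hrdiag x, h2, hvsum]
          linarith [hcMT]
        have hr0 : ∀ x ∈ Finset.Icc 1 n, ∀ y ∈ Finset.Icc 1 n, 0 ≤ r x y := by
          intro x hx y hy
          by_cases h : y = x
          · rw [h, hrdiag x]; linarith [hv0 x hx]
          · rw [hroff x y h]; exact hv0 y hy
        have hpYlb : ∀ x ∈ Finset.Icc 1 n, ∀ y ∈ Finset.Icc 1 n, pτ x y ≤ pY y := by
          intro x hx y hy
          rw [← hmarg y hy]
          exact Finset.single_le_sum (fun x' hx' => hpτ0 x' hx' y hy) hx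
        have hrpos : ∀ x ∈ Finset.Icc 1 n, ∀ y ∈ Finset.Icc 1 n, 0 < pτ x y → 0 < r x y := by
          intro x hx y hy hp
          by_cases h : y = x
          · rw [h, hrdiag x]; linarith [hv0 x hx]
          · rw [hroff x y h]
            by_cases h2 : σ y ≤ M
            · rw [hvflat y h2]; exact hcpos
            · rw [hvtail y h2]; exact lt_of_lt_of_le hp (hpYlb x hx y hy)
        have key := condEnt_le_CE n pτ hpτ0 r hr0 hrpos (fun x hx => le_of_eq (hrsum x hx))
        set D0 := ∑ x ∈ (Finset.Icc 1 n).filter (fun x => σ x ≤ M), pτ x x with hD0def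
        set DT := ∑ x ∈ (Finset.Icc 1 n).filter (fun x => ¬ σ x ≤ M), pτ x x with hDTdef
        set Sρ := ∑ x ∈ (Finset.Icc 1 n).filter (fun x => ¬ σ x ≤ M),
          pτ x x * Real.log (1 - W - c + pY x) with hSρdef
        set Sd := ∑ x ∈ (Finset.Icc 1 n).filter (fun x => ¬ σ x ≤ M),
          pτ x x * Real.log (pY x) with hSddef
        set S1 := ∑ y ∈ (Finset.Icc 1 n).filter (fun y => ¬ σ y ≤ M),
          pY y * Real.log (pY y) with hS1def
        have hDsum : D0 + DT = 1 - E := by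
          rw [hD0def, hDTdef, Finset.sum_filter_add_sum_filter_not]
          exact hdiagE
        have hTtl : ∑ y ∈ (Finset.Icc 1 n).filter (fun y => ¬ σ y ≤ M), pY y = T := by
          calc ∑ y ∈ (Finset.Icc 1 n).filter (fun y => ¬ σ y ≤ M), pY y
              = ∑ y ∈ (Finset.Icc 1 n).filter (fun y => ¬ σ y ≤ M), (fun i => pd i) (σ y) := by
                apply Finset.sum_congr rfl
                intro y hy
                exact hsort y (Finset.mem_filter.mp hy).1
            _ = ∑ i ∈ (Finset.Icc 1 n).filter (fun i => ¬ i ≤ M), pd i :=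
                transport hσ pd (fun i => ¬ i ≤ M)
            _ = T := by rw [htlIcc, hTdef]
        have hS1tl : ∑ i ∈ Finset.Icc (M+1) n, pd i * Real.log (pd i) = S1 := by
          rw [hS1def, ← htlIcc,
            ← transport hσ (fun i => pd i * Real.log (pd i)) (fun i => ¬ i ≤ M)]
          apply Finset.sum_congr rfl
          intro y hy
          show (fun i => pd i * Real.log (pd i)) (σ y) = pY y * Real.log (pY y)
          simp only
          rw [← hsort y (Finset.mem_filter.mp hy).1]
        have hfltpY : ∑ y ∈ (Finset.Icc 1 n).filter (fun y => σ y ≤ M), pY y = 1 - T := by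
          have h := Finset.sum_filter_add_sum_filter_not (Finset.Icc 1 n)
            (fun y => σ y ≤ M) pY
          rw [hpY1] at h
          linarith [hTtl]
        have hinner : ∀ x ∈ Finset.Icc 1 n,
            ∑ y ∈ Finset.Icc 1 n, pτ x y * Real.log (r x y)
            = (pτ x x * Real.log (1 - W - c + v x) - pτ x x * Real.log (v x))
              + ∑ y ∈ Finset.Icc 1 n, pτ x y * Real.log (v y) := by
          intro x hx
          rw [← Finset.add_sum_erase _ (fun y => pτ x y * Real.log (r x y)) hx]
          have h2 : ∑ y ∈ (Finset.Icc 1 n).erase x, pτ x y * Real.log (r x y)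
              = (∑ y ∈ Finset.Icc 1 n, pτ x y * Real.log (v y))
                - pτ x x * Real.log (v x) := by
            rw [Finset.sum_congr rfl (fun y hy => by
                rw [hroff x y (Finset.ne_of_mem_erase hy)]),
              Finset.sum_erase_eq_sub hx]
          rw [h2, hrdiag x]
          ring
        have hdiag1 : ∑ x ∈ Finset.Icc 1 n, pτ x x * Real.log (1 - W - c + v x)
            = D0 * Real.log (1 - W) + Sρ := by
          rw [← Finset.sum_filter_add_sum_filter_not (Finset.Icc 1 n) (fun x => σ x ≤ M)]
          congr 1
          · calc ∑ x ∈ (Finset.Icc 1 n).filter (fun x => σ x ≤ M),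
                  pτ x x * Real.log (1 - W - c + v x)
                = ∑ x ∈ (Finset.Icc 1 n).filter (fun x => σ x ≤ M),
                  pτ x x * Real.log (1 - W) := by
                  apply Finset.sum_congr rfl
                  intro x hx
                  rw [hvflat x (Finset.mem_filter.mp hx).2,
                    show (1:ℝ) - W - c + c = 1 - W from by ring]
              _ = D0 * Real.log (1 - W) := by rw [hD0def, Finset.sum_mul]
          · rw [hSρdef]
            apply Finset.sum_congr rfl
            intro x hx
            rw [hvtail x (Finset.mem_filter.mp hx).2]
        have hdiag2 : ∑ x ∈ Finset.Icc 1 n, pτ x x * Real.log (v x)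
            = D0 * Real.log c + Sd := by
          rw [← Finset.sum_filter_add_sum_filter_not (Finset.Icc 1 n) (fun x => σ x ≤ M)]
          congr 1
          · calc ∑ x ∈ (Finset.Icc 1 n).filter (fun x => σ x ≤ M),
                  pτ x x * Real.log (v x)
                = ∑ x ∈ (Finset.Icc 1 n).filter (fun x => σ x ≤ M),
                  pτ x x * Real.log c := by
                  apply Finset.sum_congr rfl
                  intro x hx
                  rw [hvflat x (Finset.mem_filter.mp hx).2]
              _ = D0 * Real.log c := by rw [hD0def, Finset.sum_mul]
          · rw [hSddef]
            apply Finset.sum_congr rfl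
            intro x hx
            rw [hvtail x (Finset.mem_filter.mp hx).2]
        have hmix : ∑ x ∈ Finset.Icc 1 n, ∑ y ∈ Finset.Icc 1 n, pτ x y * Real.log (v y)
            = (1 - T) * Real.log c + S1 := by
          rw [Finset.sum_comm]
          have h1 : ∀ y ∈ Finset.Icc 1 n,
              ∑ x ∈ Finset.Icc 1 n, pτ x y * Real.log (v y) = pY y * Real.log (v y) := by
            intro y hy
            rw [← Finset.sum_mul, hmarg y hy]
          rw [Finset.sum_congr rfl h1,
            ← Finset.sum_filter_add_sum_filter_not (Finset.Icc 1 n) (fun y => σ y ≤ M)]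
          congr 1
          · calc ∑ y ∈ (Finset.Icc 1 n).filter (fun y => σ y ≤ M), pY y * Real.log (v y)
                = ∑ y ∈ (Finset.Icc 1 n).filter (fun y => σ y ≤ M), pY y * Real.log c := by
                  apply Finset.sum_congr rfl
                  intro y hy
                  rw [hvflat y (Finset.mem_filter.mp hy).2]
              _ = (1 - T) * Real.log c := by rw [← hfltpY, Finset.sum_mul]
          · rw [hS1def]
            apply Finset.sum_congr rfl
            intro y hy
            rw [hvtail y (Finset.mem_filter.mp hy).2]
        have HCE : ∑ x ∈ Finset.Icc 1 n, ∑ y ∈ Finset.Icc 1 n, pτ x y * Real.log (r x y)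
            = (D0 * Real.log (1 - W) + Sρ) - (D0 * Real.log c + Sd)
              + ((1 - T) * Real.log c + S1) := by
          rw [Finset.sum_congr rfl hinner, Finset.sum_add_distrib,
            Finset.sum_sub_distrib, hdiag1, hdiag2, hmix]
        have hslack7 : 0 ≤ DT * (Real.log c - Real.log (1 - W)) + Sρ - Sd := by
          have h : 0 ≤ ∑ x ∈ (Finset.Icc 1 n).filter (fun x => ¬ σ x ≤ M),
              pτ x x * ((Real.log c - Real.log (1 - W))
                + (Real.log (1 - W - c + pY x) - Real.log (pY x))) := by
            apply Finset.sum_nonneg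
            intro x hx
            have hx' := Finset.mem_filter.mp hx
            rcases eq_or_lt_of_le (hpτ0 x hx'.1 x hx'.1) with h0 | h0
            · rw [← h0, zero_mul]
            · apply mul_nonneg (le_of_lt h0)
              have hpYx : 0 < pY x := lt_of_lt_of_le h0 (hpYlb x hx'.1 x hx'.1)
              have hσxm := Set.mem_Icc.mp
                (hσ.mapsTo (Set.mem_Icc.mpr (Finset.mem_Icc.mp hx'.1)))
              have hMσ : M + 1 ≤ σ x := by
                have := Nat.not_le.mp hx'.2
                omega
              have hpYc : pY x ≤ c := by
                rw [hsort x hx'.1]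
                exact hcge (σ x) hMσ hσxm.2
              have hρ : 0 < 1 - W - c + pY x := by linarith
              have hlog : Real.log ((1 - W) * pY x)
                  ≤ Real.log (c * (1 - W - c + pY x)) := by
                apply Real.log_le_log (mul_pos h1W_pos hpYx)
                nlinarith [mul_nonneg (sub_nonneg.mpr hpYc)
                  (by linarith : (0:ℝ) ≤ 1 - W - c)]
              rw [Real.log_mul (ne_of_gt h1W_pos) (ne_of_gt hpYx),
                Real.log_mul (ne_of_gt hcpos) (ne_of_gt hρ)] at hlog
              linarith
          have hexp : ∑ x ∈ (Finset.Icc 1 n).filter (fun x => ¬ σ x ≤ M),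
              pτ x x * ((Real.log c - Real.log (1 - W))
                + (Real.log (1 - W - c + pY x) - Real.log (pY x)))
              = DT * (Real.log c - Real.log (1 - W)) + Sρ - Sd := by
            rw [Finset.sum_congr rfl (fun x _ =>
              (by ring : pτ x x * ((Real.log c - Real.log (1 - W))
                + (Real.log (1 - W - c + pY x) - Real.log (pY x)))
              = pτ x x * (Real.log c - Real.log (1 - W))
                + (pτ x x * Real.log (1 - W - c + pY x) - pτ x x * Real.log (pY x)))),
              Finset.sum_add_distrib, Finset.sum_sub_distrib,
              hDTdef, Finset.sum_mul, hSρdef, hSddef]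
            ring
          linarith [hexp ▸ h]
        have hslack8 : 0 ≤ (W - E) * (Real.log (1 - W) - Real.log c) := by
          apply mul_nonneg (by linarith)
          have := Real.log_le_log hcpos (le_of_lt hc_lt)
          linarith
        have hz : 1 - E - D0 - DT = 0 := by linarith [hDsum]
        refine le_trans key ?_
        rw [HCE, Hent, hS1tl, show ((M:ℝ) - 1) * (c * Real.log c) = (W - T) * Real.log c
          from by rw [← hcMT]; ring]
        have hdiff : (-((1 - W) * Real.log (1 - W)) - (W - T) * Real.log c - S1)
            - (-((D0 * Real.log (1 - W) + Sρ) - (D0 * Real.log c + Sd)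
              + ((1 - T) * Real.log c + S1)))
            = (W - E) * (Real.log (1 - W) - Real.log c)
              + (DT * (Real.log c - Real.log (1 - W)) + Sρ - Sd)
              + (1 - E - D0 - DT) * (Real.log c - Real.log (1 - W)) := by ring
        rw [hz, zero_mul, add_zero] at hdiff
        linarith [hslack7, hslack8, hdiff]
end
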